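/- arXiv:2410.06303 — 6 statements merged into one kernel-verified Lean document; each statement's English description precedes it below -/
import Mathlib

section
/- Suppose p(x|z) and p̂(x|z) are additive energy distributions on ℝ^n, i.e., p(x|z) = Z(z)^{-1} exp(−⟨σ(z), E(x)⟩) and p̂(x|z) = Ẑ(z)^{-1} exp(−⟨σ(z), Ê(x)⟩), with finite partition functions. If p̂(·|z) = p(·|z) for all z in a finite set Z_train, then p̂(·|z') = p(·|z') for every z' in the discrete affine hull of Z_train. -/
open MeasureTheory

/-- Concatenated one-hot encoding. -/
def sig {m d : ℕ} (z : Fin m → Fin d) : Fin m × Fin d → ℝ :=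
  fun p => if z p.1 = p.2 then 1 else 0

/-- Additive energy distribution: the density of `x` given attributes `z`,
`p(x|z) = Z(z)⁻¹ exp(−⟨σ(z), E(x)⟩)` with `Z(z) = ∫ exp(−⟨σ(z), E(y)⟩) dy`. -/
noncomputable def aedPdf {n m d : ℕ} (E : (Fin n → ℝ) → Fin m × Fin d → ℝ)
    (z : Fin m → Fin d) (x : Fin n → ℝ) : ℝ :=
  (∫ y : Fin n → ℝ, Real.exp (-(∑ p, sig z p * E y p)))⁻¹ *
    Real.exp (-(∑ p, sig z p * E x p))

/-- If two additive energy distributions agree (as conditional densities) on all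
attribute vectors of a finite training set, then they agree on every attribute
vector in the discrete affine hull of the training set. -/
theorem stmt3 {n m d : ℕ} (E Ehat : (Fin n → ℝ) → Fin m × Fin d → ℝ)
    (hInt : ∀ z : Fin m → Fin d,
      Integrable (fun x : Fin n → ℝ => Real.exp (-(∑ p, sig z p * E x p))))
    (hInthat : ∀ z : Fin m → Fin d,
      Integrable (fun x : Fin n → ℝ => Real.exp (-(∑ p, sig z p * Ehat x p))))
    (Ztrain : Finset (Fin m → Fin d))
    (heq : ∀ z ∈ Ztrain, ∀ x, aedPdf Ehat z x = aedPdf E z x)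
    (z' : Fin m → Fin d) (α : (Fin m → Fin d) → ℝ)
    (hα : ∑ z ∈ Ztrain, α z = 1)
    (hz' : sig z' = ∑ z ∈ Ztrain, α z • sig z) :
    ∀ x, aedPdf Ehat z' x = aedPdf E z' x := by
  haveI : NeZero (volume : Measure (Fin n → ℝ)) := by
    constructor
    intro h
    have : (volume : Measure (Fin n → ℝ)) Set.univ ≠ 0 :=
      isOpen_univ.measure_ne_zero volume Set.univ_nonempty
    simp [h] at this
  -- notation for the energies
  set S : (Fin m → Fin d) → (Fin n → ℝ) → ℝ :=
    fun z x => ∑ p, sig z p * E x p with hS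
  set Sh : (Fin m → Fin d) → (Fin n → ℝ) → ℝ :=
    fun z x => ∑ p, sig z p * Ehat x p with hSh
  -- positivity of partition functions
  have hZpos : ∀ z, 0 < ∫ y : Fin n → ℝ, Real.exp (-(S z y)) :=
    fun z => integral_exp_pos (hInt z)
  have hZhpos : ∀ z, 0 < ∫ y : Fin n → ℝ, Real.exp (-(Sh z y)) :=
    fun z => integral_exp_pos (hInthat z)
  -- the energy difference is constant in x for training z
  have hconst : ∀ z ∈ Ztrain, ∀ x, S z x - Sh z x = S z 0 - Sh z 0 := by
    intro z hz x
    have h1 := heq z hz x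
    have h2 := heq z hz 0
    unfold aedPdf at h1 h2
    set Z := ∫ y : Fin n → ℝ, Real.exp (-(S z y)) with hZ
    set Zh := ∫ y : Fin n → ℝ, Real.exp (-(Sh z y)) with hZh
    have hZ0 : Z ≠ 0 := (hZpos z).ne'
    have hZh0 : Zh ≠ 0 := (hZhpos z).ne'
    have e1 : Real.exp (-(Sh z x)) = Zh * Z⁻¹ * Real.exp (-(S z x)) := by
      field_simp at h1 ⊢
      linarith [h1]
    have e2 : Real.exp (-(Sh z 0)) = Zh * Z⁻¹ * Real.exp (-(S z 0)) := by
      field_simp at h2 ⊢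
      linarith [h2]
    have : Real.exp (-(Sh z x) + -(S z 0)) = Real.exp (-(S z x) + -(Sh z 0)) := by
      rw [Real.exp_add, Real.exp_add, e1, e2]
      ring
    have := Real.exp_injective this
    linarith
  -- linearity of the energy in z
  have hlin : ∀ (F : (Fin n → ℝ) → Fin m × Fin d → ℝ) (x),
      ∑ p, sig z' p * F x p = ∑ z ∈ Ztrain, α z * ∑ p, sig z p * F x p := by
    intro F x
    simp only [hz', Finset.sum_apply, Pi.smul_apply, smul_eq_mul, Finset.sum_mul]
    rw [Finset.sum_comm]
    refine Finset.sum_congr rfl fun z _ => ?_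
    rw [Finset.mul_sum]
    exact Finset.sum_congr rfl fun p _ => by ring
  -- the energy difference is constant for z'
  have hconst' : ∀ x, S z' x - Sh z' x = S z' 0 - Sh z' 0 := by
    intro x
    have hx : S z' x - Sh z' x = ∑ z ∈ Ztrain, α z * (S z x - Sh z x) := by
      simp only [hS, hSh, mul_sub, Finset.sum_sub_distrib]
      rw [hlin E x, hlin Ehat x]
    have h0 : S z' 0 - Sh z' 0 = ∑ z ∈ Ztrain, α z * (S z 0 - Sh z 0) := by
      simp only [hS, hSh, mul_sub, Finset.sum_sub_distrib]
      rw [hlin E 0, hlin Ehat 0]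
    rw [hx, h0]
    exact Finset.sum_congr rfl fun z hz => by rw [hconst z hz x]
  set C := S z' 0 - Sh z' 0 with hC
  have hSh' : ∀ x, Sh z' x = S z' x - C := fun x => by
    have := hconst' x; linarith
  -- partition function relation
  have hZrel : (∫ y : Fin n → ℝ, Real.exp (-(Sh z' y)))
      = Real.exp C * ∫ y : Fin n → ℝ, Real.exp (-(S z' y)) := by
    rw [← integral_const_mul]
    refine integral_congr_ae (Filter.Eventually.of_forall fun y => ?_)
    show Real.exp (-(Sh z' y)) = Real.exp C * Real.exp (-(S z' y))
    rw [hSh' y, ← Real.exp_add]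
    congr 1
    ring
  intro x
  unfold aedPdf
  show (∫ y : Fin n → ℝ, Real.exp (-(Sh z' y)))⁻¹ * Real.exp (-(Sh z' x))
      = (∫ y : Fin n → ℝ, Real.exp (-(S z' y)))⁻¹ * Real.exp (-(S z' x))
  rw [hZrel, hSh' x, show -(S z' x - C) = C + -(S z' x) by ring, Real.exp_add,
    mul_inv]
  have hE : Real.exp C ≠ 0 := Real.exp_ne_zero C
  have hI : (∫ y : Fin n → ℝ, Real.exp (-(S z' y))) ≠ 0 := (hZpos z').ne'
  field_simp
end

section
/- Under the additive energy distribution assumption, if equality of densities p̂(x|z) = p(x|z) holds for all z in Z_train and all x, then for every z' in the discrete affine hull of Z_train there exists a constant C(z') (independent of x) such that ⟨σ(z'), Ê(x)⟩ = ⟨σ(z'), E(x)⟩ + C(z') for all x ∈ ℝ^n. -/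
open MeasureTheory

/-- If the estimated and true additive energy densities agree on the training
set, then for every `z'` in the discrete affine hull of the training set there
is a constant `C` (independent of `x`) with
`⟨σ(z'), Ê(x)⟩ = ⟨σ(z'), E(x)⟩ + C` for all `x`. -/
theorem stmt4 {n m d : ℕ} (E Ehat : (Fin n → ℝ) → Fin m × Fin d → ℝ)
    (hInt : ∀ z : Fin m → Fin d,
      Integrable (fun x : Fin n → ℝ => Real.exp (-(∑ p, sig z p * E x p))))
    (hInthat : ∀ z : Fin m → Fin d,
      Integrable (fun x : Fin n → ℝ => Real.exp (-(∑ p, sig z p * Ehat x p))))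
    (Ztrain : Finset (Fin m → Fin d))
    (heq : ∀ z ∈ Ztrain, ∀ x, aedPdf Ehat z x = aedPdf E z x)
    (z' : Fin m → Fin d) (α : (Fin m → Fin d) → ℝ)
    (hα : ∑ z ∈ Ztrain, α z = 1)
    (hz' : sig z' = ∑ z ∈ Ztrain, α z • sig z) :
    ∃ C : ℝ, ∀ x : Fin n → ℝ,
      (∑ p, sig z' p * Ehat x p) = (∑ p, sig z' p * E x p) + C := by

  have hpos : ∀ (F : (Fin n → ℝ) → Fin m × Fin d → ℝ),
      (∀ z : Fin m → Fin d,
        Integrable (fun x : Fin n → ℝ => Real.exp (-(∑ p, sig z p * F x p)))) →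
      ∀ z : Fin m → Fin d,
        0 < ∫ y : Fin n → ℝ, Real.exp (-(∑ p, sig z p * F y p)) := by
    intro F hF z
    rw [integral_pos_iff_support_of_nonneg (fun y => (Real.exp_pos _).le) (hF z)]
    have hs : Function.support
        (fun y : Fin n → ℝ => Real.exp (-(∑ p, sig z p * F y p))) = Set.univ := by
      ext y; simp [Function.support, Real.exp_ne_zero]
    rw [hs]
    exact isOpen_univ.measure_pos _ ⟨fun _ => 0, trivial⟩
  have key : ∀ z ∈ Ztrain, ∀ x,
      (∑ p, sig z p * Ehat x p) = (∑ p, sig z p * E x p)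
        + (Real.log (∫ y : Fin n → ℝ, Real.exp (-(∑ p, sig z p * E y p)))
           - Real.log (∫ y : Fin n → ℝ, Real.exp (-(∑ p, sig z p * Ehat y p)))) := by
    intro z hz x
    have h1 := hpos E hInt z
    have h2 := hpos Ehat hInthat z
    have h := heq z hz x
    unfold aedPdf at h
    have hlog := congrArg Real.log h
    rw [Real.log_mul (by positivity) (Real.exp_ne_zero _),
        Real.log_mul (by positivity) (Real.exp_ne_zero _),
        Real.log_inv, Real.log_inv, Real.log_exp, Real.log_exp] at hlog
    linarith
  refine ⟨∑ z ∈ Ztrain, α z *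
      (Real.log (∫ y : Fin n → ℝ, Real.exp (-(∑ p, sig z p * E y p)))
       - Real.log (∫ y : Fin n → ℝ, Real.exp (-(∑ p, sig z p * Ehat y p)))), fun x => ?_⟩
  have hz'p : ∀ p, sig z' p = ∑ z ∈ Ztrain, α z * sig z p := by
    intro p
    have := congrFun hz' p
    simpa using this
  have swap : ∀ (F : (Fin n → ℝ) → Fin m × Fin d → ℝ),
      (∑ p, sig z' p * F x p) = ∑ z ∈ Ztrain, α z * ∑ p, sig z p * F x p := by
    intro F
    simp only [hz'p, Finset.sum_mul, Finset.mul_sum]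
    rw [Finset.sum_comm]
    exact Finset.sum_congr rfl fun z _ => Finset.sum_congr rfl fun p _ => by ring
  rw [swap Ehat, swap E, Finset.sum_congr rfl fun z hz => by rw [key z hz x]]
  rw [← Finset.sum_add_distrib]
  exact Finset.sum_congr rfl fun z _ => by ring
end

section
/- Let p(x|z) be an additive energy distribution and z' ∈ DAff(Z_train) with affine weights α_z. Then the conditional density at z' satisfies log p(x|z') = Σ_{z∈Z_train} α_z log p(x|z) − log ∫ exp( Σ_{z∈Z_train} α_z log p(y|z) ) dy, i.e., the density at the novel group is the normalized geometric mixture (with possibly negative weights summing to 1) of the training conditional densities. -/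
open MeasureTheory

/-- For `z'` in the discrete affine hull of the training set with weights `α`,
the density at the novel group is the normalized geometric mixture of the
training conditional densities:
`log p(x|z') = ∑ α_z log p(x|z) − log ∫ exp(∑ α_z log p(y|z)) dy`. -/
theorem stmt6 {n m d : ℕ} (E : (Fin n → ℝ) → Fin m × Fin d → ℝ)
    (hInt : ∀ z : Fin m → Fin d,
      Integrable (fun x : Fin n → ℝ => Real.exp (-(∑ p, sig z p * E x p))))
    (Ztrain : Finset (Fin m → Fin d))
    (z' : Fin m → Fin d) (α : (Fin m → Fin d) → ℝ)
    (hα : ∑ z ∈ Ztrain, α z = 1)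
    (hz' : sig z' = ∑ z ∈ Ztrain, α z • sig z)
    (hInt2 : Integrable (fun y : Fin n → ℝ =>
      Real.exp (∑ z ∈ Ztrain, α z * Real.log (aedPdf E z y)))) :
    ∀ x : Fin n → ℝ,
      Real.log (aedPdf E z' x) =
        (∑ z ∈ Ztrain, α z * Real.log (aedPdf E z x)) -
          Real.log (∫ y : Fin n → ℝ,
            Real.exp (∑ z ∈ Ztrain, α z * Real.log (aedPdf E z y))) := by
  intro x
  set S : (Fin m → Fin d) → (Fin n → ℝ) → ℝ :=
    fun z y => ∑ p, sig z p * E y p with hS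
  set Z : (Fin m → Fin d) → ℝ :=
    fun z => ∫ y : Fin n → ℝ, Real.exp (-(S z y)) with hZ
  have hZpos : ∀ z, 0 < Z z := fun z => integral_exp_pos (hInt z)
  -- log of the density
  have hlog : ∀ z y, Real.log (aedPdf E z y) = -(S z y) - Real.log (Z z) := by
    intro z y
    unfold aedPdf
    rw [Real.log_mul (inv_ne_zero (hZpos z).ne') (Real.exp_ne_zero _),
      Real.log_inv, Real.log_exp]
    ring
  -- the weighted sum of energies equals the energy at z'
  have hsum : ∀ y, ∑ z ∈ Ztrain, α z * S z y = S z' y := by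
    intro y
    simp only [hS, Finset.mul_sum]
    rw [Finset.sum_comm]
    refine Finset.sum_congr rfl fun p _ => ?_
    have h := congrFun hz' p
    simp only [Finset.sum_apply, Pi.smul_apply, smul_eq_mul] at h
    rw [h, Finset.sum_mul]
    exact Finset.sum_congr rfl fun z _ => by ring
  set K : ℝ := ∑ z ∈ Ztrain, α z * Real.log (Z z) with hK
  -- the exponent of the geometric mixture
  have hkey : ∀ y, ∑ z ∈ Ztrain, α z * Real.log (aedPdf E z y) = -(S z' y) - K := by
    intro y
    simp only [hlog, mul_sub, Finset.sum_sub_distrib, hK]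
    rw [← hsum y]
    rw [Finset.sum_congr rfl fun z _ => (by ring : α z * -(S z y) = -(α z * S z y)),
      Finset.sum_neg_distrib]
  -- compute the integral
  have hintval : (∫ y : Fin n → ℝ,
      Real.exp (∑ z ∈ Ztrain, α z * Real.log (aedPdf E z y)))
      = Real.exp (-K) * Z z' := by
    rw [show (fun y : Fin n → ℝ =>
        Real.exp (∑ z ∈ Ztrain, α z * Real.log (aedPdf E z y)))
        = fun y => Real.exp (-K) * Real.exp (-(S z' y)) by
      funext y; rw [hkey y, sub_eq_add_neg, add_comm, Real.exp_add]]
    rw [integral_const_mul]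
  rw [hkey x, hintval, Real.log_mul (Real.exp_ne_zero _) (hZpos z').ne',
    Real.log_exp, hlog z' x]
  ring
end

section
/- Two additive functions f, g : {1,...,d}^m → ℝ that agree on a set S also agree on the discrete affine hull DAff(S) of S. -/
/-- Two additive functions on the grid `{1,…,d}^m` that agree on a set `S`
also agree on the discrete affine hull of `S`. -/
theorem stmt8 {m d : ℕ} (f g : (Fin m → Fin d) → ℝ)
    (hf : ∃ fc : Fin m → Fin d → ℝ, ∀ z, f z = ∑ j, fc j (z j))
    (hg : ∃ gc : Fin m → Fin d → ℝ, ∀ z, g z = ∑ j, gc j (z j))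
    (S : Finset (Fin m → Fin d)) (hagree : ∀ z ∈ S, f z = g z)
    (z' : Fin m → Fin d)
    (hz' : sig z' ∈ affineSpan ℝ (sig '' (S : Set (Fin m → Fin d)))) :
    f z' = g z' := by
  obtain ⟨fc, hfc⟩ := hf
  obtain ⟨gc, hgc⟩ := hg
  set L : (Fin m × Fin d → ℝ) → ℝ :=
    fun v => ∑ j, ∑ k, (fc j k - gc j k) * v (j, k) with hL
  have key : ∀ z : Fin m → Fin d, L (sig z) = f z - g z := by
    intro z
    rw [hfc, hgc, ← Finset.sum_sub_distrib]
    refine Finset.sum_congr rfl fun j _ => ?_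
    rw [Finset.sum_eq_single (z j)]
    · simp [sig]
    · intro k _ hk
      simp [sig, Ne.symm hk]
    · simp
  have hzero : L (sig z') = 0 := by
    refine affineSpan_induction (p := fun x => L x = 0) hz' ?_ ?_
    · rintro x ⟨z, hz, rfl⟩
      rw [key]
      simp [hagree z hz]
    · intro c u v w hu hv hw
      have : L (c • (u -ᵥ v) +ᵥ w) = c * (L u - L v) + L w := by
        simp only [hL, vsub_eq_sub, vadd_eq_add, Pi.add_apply, Pi.smul_apply,
          Pi.sub_apply, smul_eq_mul]
        rw [mul_sub, Finset.mul_sum, Finset.mul_sum, ← Finset.sum_sub_distrib,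
          ← Finset.sum_add_distrib]
        refine Finset.sum_congr rfl fun j _ => ?_
        rw [Finset.mul_sum, Finset.mul_sum, ← Finset.sum_sub_distrib,
          ← Finset.sum_add_distrib]
        refine Finset.sum_congr rfl fun k _ => ?_
        ring
      rw [this, hu, hv, hw]
      ring
  have := key z'
  rw [hzero] at this
  linarith
end

section
/- Let G = {1,...,d}^m and let A ⊆ G satisfy DAff(A) = A (i.e., A is affinely closed within the grid). If |A|/d^m ≥ 1/2, then dim Aff(σ(G)) − dim Aff(σ(A)) ≤ 2d·(d^m − |A|)/d^m. -/
open Module Submodule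
open Matrix (vecCons vecTail)
open scoped Finset

theorem finrank_comap_eq_finrank_range_inf_add_finrank_ker {K V V₂ : Type*} [DivisionRing K]
    [AddCommGroup V] [Module K V] [FiniteDimensional K V] [AddCommGroup V₂] [Module K V₂]
    (f : V →ₗ[K] V₂) (q : Submodule K V₂) :
    finrank K (q.comap f)
      = finrank K ↥(LinearMap.range f ⊓ q) + finrank K (LinearMap.ker f) := by
  rw [← (f.domRestrict (q.comap f)).finrank_range_add_finrank_ker, LinearMap.range_domRestrict,
    map_comap_eq, LinearMap.ker_domRestrict,
    (comapSubtypeEquivOfLe (LinearMap.ker_le_comap f)).finrank_eq]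

theorem finrank_direction_affineSpan_add_one {K V : Type*} [Field K] [AddCommGroup V] [Module K V]
    [FiniteDimensional K V] {s : Set V} (hs : s.Nonempty) :
    finrank K (affineSpan K s).direction + 1
      = finrank K (span K ((fun x => (x, (1 : K))) '' s)) := by
  obtain ⟨x₀, hx₀⟩ := hs
  let j : V →ₗ[K] V × K := LinearMap.inl K V K
  have hspan : span K ((fun x => (x, (1 : K))) '' s)
      = (vectorSpan K s).map j ⊔ K ∙ (x₀, 1) := by
    rw [vectorSpan_eq_span_vsub_set_right K hx₀, map_span, Set.image_image]
    apply le_antisymm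
    · rw [span_le]
      rintro - ⟨x, hx, rfl⟩
      have : (x, (1 : K)) = j (x -ᵥ x₀) + (x₀, 1) := by simp [j]
      rw [SetLike.mem_coe, show (fun x => (x, (1 : K))) x = (x, 1) from rfl, this]
      exact add_mem (mem_sup_left (subset_span ⟨x, hx, rfl⟩))
        (mem_sup_right (mem_span_singleton_self _))
    · refine sup_le (span_le.mpr ?_) (span_le.mpr ?_)
      · rintro - ⟨x, hx, rfl⟩
        have : j (x -ᵥ x₀) = (x, (1 : K)) - (x₀, 1) := by simp [j]
        rw [SetLike.mem_coe, show (fun x => j (x -ᵥ x₀)) x = j (x -ᵥ x₀) from rfl, this]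
        exact sub_mem (subset_span ⟨x, hx, rfl⟩) (subset_span ⟨x₀, hx₀, rfl⟩)
      · exact Set.singleton_subset_iff.mpr (subset_span ⟨x₀, hx₀, rfl⟩)
  have hdisj : (vectorSpan K s).map j ⊓ K ∙ (x₀, 1) = ⊥ := by
    rw [eq_bot_iff]
    intro y hy
    obtain ⟨⟨v, -, hv⟩, hc⟩ := mem_inf.mp hy
    obtain ⟨c, rfl⟩ := mem_span_singleton.mp hc
    have hc0 : c = 0 := by simpa [j] using (congrArg Prod.snd hv).symm
    simp [hc0]
  have hdim := finrank_sup_add_finrank_inf_eq ((vectorSpan K s).map j) (K ∙ (x₀, (1 : K)))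
  rw [hdisj, finrank_bot, add_zero, finrank_span_singleton (by simp),
    ← (equivMapOfInjective j LinearMap.inl_injective _).finrank_eq] at hdim
  rw [hspan, hdim, direction_affineSpan]

variable {m d : ℕ}

def affineGridFunctions (m d : ℕ) : Submodule ℝ ((Fin m → Fin d) → ℝ) :=
  span ℝ (insert 1 (Set.range fun p z => sig z p))

def vanishingOn {α : Type*} (s : Set α) : Submodule ℝ (α → ℝ) where
  carrier := {f | ∀ x ∈ s, f x = 0}
  add_mem' hf hg x hx := by simp [hf x hx, hg x hx]
  zero_mem' _ _ := rfl
  smul_mem' c _ hf x hx := by simp [hf x hx]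

theorem mem_vanishingOn {α : Type*} {s : Set α} {f : α → ℝ} :
    f ∈ vanishingOn s ↔ ∀ x ∈ s, f x = 0 := Iff.rfl

theorem vanishingOn_univ {α : Type*} : vanishingOn (Set.univ : Set α) = ⊥ :=
  eq_bot_iff.mpr fun _ hf => (mem_bot ℝ).mpr (funext fun x => hf x trivial)

def slice (A : Finset (Fin (m + 1) → Fin d)) (a : Fin d) : Finset (Fin m → Fin d) :=
  {z | vecCons a z ∈ A}

theorem mem_slice {A : Finset (Fin (m + 1) → Fin d)} {a : Fin d} {z : Fin m → Fin d} :
    z ∈ slice A a ↔ vecCons a z ∈ A := by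
  simp [slice]

theorem sum_card_slice (A : Finset (Fin (m + 1) → Fin d)) : ∑ a, #(slice A a) = #A := by
  rw [Finset.card_eq_sum_card_fiberwise (f := fun z => z 0) (t := Finset.univ)
    fun _ _ => Finset.mem_univ _]
  refine Finset.sum_congr rfl fun a _ =>
    Finset.card_nbij' (vecCons a) vecTail ?_ ?_ ?_ ?_
  · intro z hz
    simp_all [mem_slice]
  · intro z hz
    simp only [Finset.coe_filter, Set.mem_ofPred_eq] at hz
    rw [Finset.mem_coe, mem_slice, ← hz.2]
    exact (Fin.cons_self_tail z).symm ▸ hz.1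
  · intro z _
    simp
  · intro z hz
    simp only [Finset.coe_filter, Set.mem_ofPred_eq] at hz
    rw [← hz.2]
    exact Fin.cons_self_tail z

@[simp]
theorem sig_vecCons_zero (a b : Fin d) (z : Fin m → Fin d) :
    sig (vecCons a z) (0, b) = if a = b then 1 else 0 := rfl

@[simp]
theorem sig_vecCons_succ (a b : Fin d) (z : Fin m → Fin d) (j : Fin m) :
    sig (vecCons a z) (j.succ, b) = sig z (j, b) := rfl

theorem funLeft_cons_mem_affineGridFunctions (a : Fin d) {f : (Fin (m + 1) → Fin d) → ℝ}
    (hf : f ∈ affineGridFunctions (m + 1) d) :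
    LinearMap.funLeft ℝ ℝ (vecCons a) f ∈ affineGridFunctions m d := by
  induction hf using span_induction with
  | mem g hg =>
    obtain rfl | ⟨⟨i, b⟩, rfl⟩ := hg
    · exact subset_span (Set.mem_insert _ _)
    · induction i using Fin.cases with
      | zero =>
        have : LinearMap.funLeft ℝ ℝ (vecCons a) (fun z : Fin (m + 1) → Fin d => sig z (0, b))
            = (if a = b then (1 : ℝ) else 0) • (1 : (Fin m → Fin d) → ℝ) := by
          ext z; simp
        rw [this]
        exact smul_mem _ _ (subset_span (Set.mem_insert _ _))
      | succ j =>
        have : LinearMap.funLeft ℝ ℝ (vecCons a)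
            (fun z : Fin (m + 1) → Fin d => sig z (j.succ, b)) = fun z => sig z (j, b) := by
          ext z; simp
        rw [this]
        exact subset_span (Set.mem_insert_of_mem _ ⟨(j, b), rfl⟩)
  | zero => simp
  | add _ _ _ _ hf hg => simpa using add_mem hf hg
  | smul c _ _ hf => simpa using smul_mem _ c hf

theorem apply_cons_sub_apply_cons_eq {f : (Fin (m + 1) → Fin d) → ℝ}
    (hf : f ∈ affineGridFunctions (m + 1) d) (a a' : Fin d) (z w : Fin m → Fin d) :
    f (vecCons a z) - f (vecCons a w) = f (vecCons a' z) - f (vecCons a' w) := by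
  induction hf using span_induction with
  | mem g hg =>
    obtain rfl | ⟨⟨i, b⟩, rfl⟩ := hg
    · simp
    · induction i using Fin.cases <;> simp
  | zero => simp
  | add _ _ _ _ hf hg => simp only [Pi.add_apply]; linarith
  | smul c _ _ hf => simp only [Pi.smul_apply, smul_eq_mul, ← mul_sub, hf]

theorem apply_cons_eq_apply_cons {f : (Fin (m + 1) → Fin d) → ℝ}
    (hf : f ∈ affineGridFunctions (m + 1) d) {a₀ : Fin d}
    (hzero : ∀ z, f (vecCons a₀ z) = 0) (a : Fin d) (z w : Fin m → Fin d) :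
    f (vecCons a z) = f (vecCons a w) := by
  have := apply_cons_sub_apply_cons_eq hf a a₀ z w
  rw [hzero, hzero] at this
  linarith

theorem finrank_inf_vanishingOn_le (A : Finset (Fin (m + 1) → Fin d)) (a₀ : Fin d) :
    finrank ℝ ↥(affineGridFunctions (m + 1) d ⊓ vanishingOn ↑A)
      ≤ finrank ℝ ↥(affineGridFunctions m d ⊓ vanishingOn ↑(slice A a₀))
        + #{a | slice A a = ∅} := by
  set Z := affineGridFunctions (m + 1) d ⊓ vanishingOn ↑A
  set Z₀ := affineGridFunctions m d ⊓ vanishingOn ↑(slice A a₀)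
  set T : Finset (Fin d) := {a | slice A a = ∅}
  let restrict : Z →ₗ[ℝ] Z₀ :=
    ((LinearMap.funLeft ℝ ℝ (vecCons a₀)).comp Z.subtype).codRestrict Z₀ fun f =>
      ⟨funLeft_cons_mem_affineGridFunctions a₀ f.2.1, fun z hz => f.2.2 _ (mem_slice.mp hz)⟩
  let valuesOnEmpty : Z →ₗ[ℝ] (T → ℝ) :=
    (LinearMap.pi fun a : T => LinearMap.proj (vecCons a.1 fun _ => a₀)).comp Z.subtype
  have hinj : Function.Injective (restrict.prod valuesOnEmpty) := by
    rw [← LinearMap.ker_eq_bot, eq_bot_iff]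
    intro f hf
    obtain ⟨hres, hvals⟩ := Prod.ext_iff.mp (LinearMap.mem_ker.mp hf)
    have hzero : ∀ z, f.1 (vecCons a₀ z) = 0 := congrFun (congrArg Subtype.val hres)
    suffices h : ∀ a z, f.1 (vecCons a z) = 0 by
      rw [mem_bot, Subtype.ext_iff, ZeroMemClass.coe_zero]
      exact funext fun z => Matrix.cons_head_tail z ▸ h _ _
    intro a z
    by_cases hempty : slice A a = ∅
    · rw [apply_cons_eq_apply_cons f.2.1 hzero _ _ fun _ => a₀]
      exact congrFun hvals ⟨a, by simpa [T] using hempty⟩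
    · obtain ⟨w, hw⟩ := Finset.nonempty_iff_ne_empty.mpr hempty
      rw [apply_cons_eq_apply_cons f.2.1 hzero _ _ w]
      exact f.2.2 _ (mem_slice.mp hw)
  calc finrank ℝ Z ≤ finrank ℝ (Z₀ × (T → ℝ)) :=
        LinearMap.finrank_le_finrank_of_injective hinj
    _ = finrank ℝ Z₀ + #T := by simp

theorem card_add_card_empty_mul_le (A : Finset (Fin (m + 1) → Fin d)) {a₀ : Fin d}
    (ha₀ : ∀ a, #(slice A a) ≤ #(slice A a₀)) :
    #A + #{a | slice A a = ∅} * #(slice A a₀) ≤ d * #(slice A a₀) := by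
  calc #A + #{a | slice A a = ∅} * #(slice A a₀)
      = ∑ a, (#(slice A a) + if slice A a = ∅ then #(slice A a₀) else 0) := by
        rw [Finset.sum_add_distrib, sum_card_slice, Finset.card_filter, Finset.sum_mul]
        simp [ite_mul]
    _ ≤ ∑ _a : Fin d, #(slice A a₀) := by
        refine Finset.sum_le_sum fun a _ => ?_
        split_ifs with h
        · simp [h]
        · simpa using ha₀ a
    _ = d * #(slice A a₀) := by simp

theorem finrank_inf_vanishingOn_mul_pow_le (A : Finset (Fin m → Fin d))
    (hA : (d : ℝ) ^ m ≤ 2 * #A) :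
    (finrank ℝ ↥(affineGridFunctions m d ⊓ vanishingOn ↑A) : ℝ) * d ^ m
      ≤ 2 * d * (d ^ m - #A) := by
  induction m with
  | zero =>
    obtain ⟨z₀, hz₀⟩ : A.Nonempty := by
      rw [← Finset.card_pos, ← Nat.cast_pos (α := ℝ)]
      simp only [pow_zero] at hA
      linarith
    obtain rfl : A = Finset.univ :=
      Finset.eq_univ_of_forall fun z => Subsingleton.elim z₀ z ▸ hz₀
    rw [Finset.coe_univ, vanishingOn_univ]
    simp
  | succ m ih =>
    rcases Nat.eq_zero_or_pos d with rfl | hd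
    · simp
    have : NeZero d := ⟨hd.ne'⟩
    obtain ⟨a₀, -, ha₀⟩ := Finset.exists_max_image Finset.univ (fun a => #(slice A a))
      Finset.univ_nonempty
    set k := finrank ℝ ↥(affineGridFunctions (m + 1) d ⊓ vanishingOn ↑A)
    set k₀ := finrank ℝ ↥(affineGridFunctions m d ⊓ vanishingOn ↑(slice A a₀))
    set s := #{a | slice A a = ∅}
    set c₀ := #(slice A a₀)
    have hk : (k : ℝ) ≤ k₀ + s := by exact_mod_cast finrank_inf_vanishingOn_le A a₀
    have hcount : (#A : ℝ) + s * c₀ ≤ d * c₀ := by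
      exact_mod_cast card_add_card_empty_mul_le A fun a => ha₀ a (Finset.mem_univ a)
    have hs : (0 : ℝ) ≤ s := s.cast_nonneg
    have hd' : (0 : ℝ) < d := Nat.cast_pos.mpr hd
    have hhalf : (d : ℝ) ^ m ≤ 2 * c₀ := by
      refine le_of_mul_le_mul_left ?_ hd'
      have : (0 : ℝ) ≤ s * c₀ := by positivity
      rw [pow_succ'] at hA
      linarith
    calc (k : ℝ) * d ^ (m + 1) = d * (k * d ^ m) := by ring
      _ ≤ d * ((k₀ + s) * d ^ m) := by gcongr
      _ ≤ d * (2 * d * (d ^ m - c₀) + s * (2 * c₀)) := by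
          rw [add_mul]
          gcongr ?_ * (?_ + ?_)
          · exact ih _ hhalf
          · exact mul_le_mul_of_nonneg_left hhalf hs
      _ ≤ 2 * d * (d ^ (m + 1) - #A) := by rw [pow_succ']; nlinarith

def evalAtGrid (m d : ℕ) :
    Dual ℝ ((Fin m × Fin d → ℝ) × ℝ) →ₗ[ℝ] ((Fin m → Fin d) → ℝ) :=
  LinearMap.pi fun z => Dual.eval ℝ _ (sig z, 1)

theorem comap_evalAtGrid_vanishingOn (S : Set (Fin m → Fin d)) :
    (vanishingOn S).comap (evalAtGrid m d)
      = (span ℝ ((fun x => (x, (1 : ℝ))) '' (sig '' S))).dualAnnihilator := by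
  ext φ
  rw [mem_comap, ← SetLike.mem_coe (p := (span ℝ _).dualAnnihilator), coe_dualAnnihilator_span,
    Set.image_image]
  simp [evalAtGrid, mem_vanishingOn, Set.subset_def]

theorem range_evalAtGrid : LinearMap.range (evalAtGrid m d) = affineGridFunctions m d := by
  apply le_antisymm
  · rintro - ⟨φ, rfl⟩
    have hφ : evalAtGrid m d φ
        = ∑ p, φ (Pi.single p 1, 0) • (fun z => sig z p) + φ (0, 1) • 1 := by
      ext z
      have hz : (sig z, (1 : ℝ)) = ∑ p, sig z p • (Pi.single p 1, 0) + (0, 1) := by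
        ext q <;> simp [Prod.fst_sum, Prod.snd_sum, Finset.sum_apply, Pi.single_apply]
      simp only [evalAtGrid, LinearMap.pi_apply, Dual.eval_apply]
      rw [hz, map_add, map_sum]
      simp only [map_smul, smul_eq_mul]
      simp [mul_comm]
    rw [hφ]
    exact add_mem
      (sum_mem fun p _ => smul_mem _ _ (subset_span (Set.mem_insert_of_mem _ ⟨p, rfl⟩)))
      (smul_mem _ _ (subset_span (Set.mem_insert _ _)))
  · refine span_le.mpr (Set.insert_subset ⟨LinearMap.snd ℝ _ ℝ, rfl⟩ ?_)
    rintro - ⟨p, rfl⟩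
    exact ⟨(LinearMap.proj p).comp (LinearMap.fst ℝ _ ℝ), rfl⟩

theorem finrank_direction_affineSpan_range_sig {A : Finset (Fin m → Fin d)} (hA : A.Nonempty) :
    finrank ℝ (affineSpan ℝ (Set.range (sig (m := m) (d := d)))).direction
      = finrank ℝ (affineSpan ℝ (sig '' (A : Set (Fin m → Fin d)))).direction
        + finrank ℝ ↥(affineGridFunctions m d ⊓ vanishingOn ↑A) := by
  have hannA := Subspace.finrank_add_finrank_dualAnnihilator_eq
    (span ℝ ((fun x => (x, (1 : ℝ))) '' (sig '' (A : Set (Fin m → Fin d)))))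
  have hannG := Subspace.finrank_add_finrank_dualAnnihilator_eq
    (span ℝ ((fun x => (x, (1 : ℝ))) '' Set.range (sig (m := m) (d := d))))
  have hcomapA :=
    finrank_comap_eq_finrank_range_inf_add_finrank_ker (evalAtGrid m d) (vanishingOn ↑A)
  have hcomapG :=
    finrank_comap_eq_finrank_range_inf_add_finrank_ker (evalAtGrid m d) (vanishingOn Set.univ)
  rw [comap_evalAtGrid_vanishingOn] at hcomapA hcomapG
  rw [range_evalAtGrid] at hcomapA
  rw [vanishingOn_univ, inf_bot_eq, finrank_bot, zero_add] at hcomapG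
  obtain ⟨z₀, hz₀⟩ := hA
  have hdirA := finrank_direction_affineSpan_add_one (K := ℝ)
    (show (sig '' (A : Set (Fin m → Fin d))).Nonempty from ⟨sig z₀, z₀, hz₀, rfl⟩)
  have hdirG := finrank_direction_affineSpan_add_one (K := ℝ)
    (show (Set.range sig).Nonempty from ⟨sig z₀, z₀, rfl⟩)
  rw [Set.image_univ] at hcomapG
  omega

theorem stmt10_general {m d : ℕ} (A : Finset (Fin m → Fin d))
    (hbig : (1 : ℝ) / 2 ≤ (A.card : ℝ) / (d : ℝ) ^ m) :
    (Module.finrank ℝ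
        (affineSpan ℝ (Set.range (sig (m := m) (d := d)))).direction : ℝ) -
      (Module.finrank ℝ
        (affineSpan ℝ (sig '' (A : Set (Fin m → Fin d)))).direction : ℝ) ≤
      2 * d * (((d : ℝ) ^ m - A.card) / (d : ℝ) ^ m) := by
  have hpos : (0 : ℝ) < (d : ℝ) ^ m := by
    refine (pow_nonneg d.cast_nonneg m).lt_of_ne fun h => ?_
    rw [← h, div_zero] at hbig
    norm_num at hbig
  have hhalf : (d : ℝ) ^ m ≤ 2 * #A := by
    rw [le_div_iff₀ hpos] at hbig
    linarith
  have hA : A.Nonempty := by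
    rw [← Finset.card_pos, ← Nat.cast_pos (α := ℝ)]
    linarith
  rw [finrank_direction_affineSpan_range_sig hA, Nat.cast_add, add_sub_cancel_left,
    ← mul_div_assoc, le_div_iff₀ hpos]
  exact finrank_inf_vanishingOn_mul_pow_le A hhalf

/-- Key lemma: if `A ⊆ {1,…,d}^m` is affinely closed within the grid and
contains at least half the grid points, then
`dim Aff(σ(G)) − dim Aff(σ(A)) ≤ 2d·(d^m − |A|)/d^m`. -/
theorem stmt10 {m d : ℕ} (A : Finset (Fin m → Fin d))
    (hclosed : ∀ z : Fin m → Fin d,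
      sig z ∈ affineSpan ℝ (sig '' (A : Set (Fin m → Fin d))) → z ∈ A)
    (hbig : (1 : ℝ) / 2 ≤ (A.card : ℝ) / (d : ℝ) ^ m) :
    (Module.finrank ℝ
        (affineSpan ℝ (Set.range (sig (m := m) (d := d)))).direction : ℝ) -
      (Module.finrank ℝ
        (affineSpan ℝ (sig '' (A : Set (Fin m → Fin d)))).direction : ℝ) ≤
      2 * d * (((d : ℝ) ^ m - A.card) / (d : ℝ) ^ m) :=
  stmt10_general A hbig
end

section
/- In the two-attribute grid G = {1,...,d}^2 with one-hot embedding σ, consider any 2×2 subgrid {(i,j),(i,j'),(i',j),(i',j')} with i ≠ i', j ≠ j'. If three of the four points lie in the discrete affine hull of a set N, then so does the fourth; consequently, if the affine hull of N contains an m×n subgrid S and a new point g shares its first coordinate with a point of S and its second coordinate is new, then the affine hull of N ∪ {g} contains the enlarged subgrid of size m×(n+1). -/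
/-- Concatenated one-hot encoding of a pair of attributes in `{1,…,d}²`. -/
def sig2 {d : ℕ} (z : Fin d × Fin d) : Fin d ⊕ Fin d → ℝ :=
  Sum.elim (fun k => if z.1 = k then 1 else 0) (fun k => if z.2 = k then 1 else 0)

/-- Membership in the discrete affine hull of `N ⊆ {1,…,d}²`. -/
def DAff2 {d : ℕ} (N : Finset (Fin d × Fin d)) (z : Fin d × Fin d) : Prop :=
  ∃ α : Fin d × Fin d → ℝ, ∑ w ∈ N, α w = 1 ∧ sig2 z = ∑ w ∈ N, α w • sig2 w

lemma daff2_fourth {d : ℕ} (N : Finset (Fin d × Fin d)) (i i' j j' : Fin d)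
    (h1 : DAff2 N (i, j)) (h2 : DAff2 N (i, j')) (h3 : DAff2 N (i', j)) :
    DAff2 N (i', j') := by
  obtain ⟨α, hα1, hα2⟩ := h1
  obtain ⟨β, hβ1, hβ2⟩ := h2
  obtain ⟨γ, hγ1, hγ2⟩ := h3
  refine ⟨fun w => γ w + β w - α w, ?_, ?_⟩
  · simp [Finset.sum_add_distrib, Finset.sum_sub_distrib, hα1, hβ1, hγ1]
  · have hsum : ∑ w ∈ N, (γ w + β w - α w) • sig2 w =
        (∑ w ∈ N, γ w • sig2 w) + (∑ w ∈ N, β w • sig2 w) - (∑ w ∈ N, α w • sig2 w) := by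
      simp only [sub_smul, add_smul, Finset.sum_sub_distrib, Finset.sum_add_distrib]
    rw [hsum, ← hα2, ← hβ2, ← hγ2]
    funext x
    cases x <;> simp [sig2]

lemma daff2_mono {d : ℕ} (N : Finset (Fin d × Fin d)) (g z : Fin d × Fin d)
    (h : DAff2 N z) : DAff2 (insert g N) z := by
  obtain ⟨α, h1, h2⟩ := h
  by_cases hg : g ∈ N
  · rw [Finset.insert_eq_self.mpr hg]; exact ⟨α, h1, h2⟩
  · refine ⟨Function.update α g 0, ?_, ?_⟩
    · rw [Finset.sum_insert hg, Function.update_self,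
        Finset.sum_congr rfl fun w hw =>
          Function.update_of_ne (ne_of_mem_of_not_mem hw hg) 0 α, h1]
      ring
    · rw [Finset.sum_insert hg, Function.update_self,
        Finset.sum_congr rfl fun w hw => by
          rw [Function.update_of_ne (ne_of_mem_of_not_mem hw hg) 0 α]]
      rw [zero_smul, zero_add, h2]

lemma daff2_self {d : ℕ} (N : Finset (Fin d × Fin d)) (g : Fin d × Fin d) :
    DAff2 (insert g N) g := by
  refine ⟨fun w => if w = g then 1 else 0, ?_, ?_⟩
  · rw [Finset.sum_ite_eq' (insert g N) g (fun _ => (1:ℝ))]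
    simp
  · have : ∀ w : Fin d × Fin d, (if w = g then (1:ℝ) else 0) • sig2 w
        = if w = g then sig2 w else 0 := by
      intro w; split <;> simp_all
    simp_rw [this]
    rw [Finset.sum_ite_eq' (insert g N) g (fun w => sig2 w)]
    simp

/-- In any 2×2 subgrid, if three of the four points lie in the discrete affine
hull of `N` then so does the fourth; consequently if `DAff(N)` contains a
subgrid `S1 × S2` and a new point `g = (gx, gy)` shares its first coordinate
with `S1` while its second coordinate is new, then `DAff(N ∪ {g})` contains the
enlarged subgrid `S1 × (S2 ∪ {gy})`. -/
theorem stmt11 {d : ℕ} (N : Finset (Fin d × Fin d)) :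
    (∀ i i' j j' : Fin d, i ≠ i' → j ≠ j' →
      DAff2 N (i, j) → DAff2 N (i, j') → DAff2 N (i', j) → DAff2 N (i', j')) ∧
    (∀ (S1 S2 : Finset (Fin d)) (gx gy : Fin d),
      S1.Nonempty → S2.Nonempty →
      (∀ x ∈ S1, ∀ y ∈ S2, DAff2 N (x, y)) →
      gx ∈ S1 → gy ∉ S2 →
      ∀ x ∈ S1, ∀ y ∈ insert gy S2, DAff2 (insert (gx, gy) N) (x, y)) := by
  constructor
  · intro i i' j j' _ _ h1 h2 h3
    exact daff2_fourth N i i' j j' h1 h2 h3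
  · intro S1 S2 gx gy _ hS2 hall hgx hgy x hx y hy
    rcases Finset.mem_insert.mp hy with rfl | hy2
    · by_cases hxg : x = gx
      · subst hxg; exact daff2_self N (x, y)
      · obtain ⟨y0, hy0⟩ := hS2
        exact daff2_fourth (insert (gx, y) N) gx x y0 y
          (daff2_mono N _ _ (hall gx hgx y0 hy0))
          (daff2_self N (gx, y))
          (daff2_mono N _ _ (hall x hx y0 hy0))
    · exact daff2_mono N _ _ (hall x hx y hy2)
end
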